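/- Let μ be a finite nonnegative Borel measure on ℂ with compact support K, let γ ∈ ℝ with γ ≠ 0, and let w ∈ ℂ. Let U ⊂ ℂ be a bounded connected open set containing K whose frontier Γ is homeomorphic to the unit circle, is disjoint from K, and is such that ℂ \ closure(U) is connected. Suppose every z ∈ Γ satisfies conj(z) − ∫ 1/(z − ζ) dμ(ζ) − γ z = conj(w). Then Γ is an ellipse: there is an invertible ℝ-affine map T : ℂ → ℂ with Γ = T '' { z : |z| = 1 }. -/

import Mathlib

/-!
Let `f` be the Cauchy transform of `μ` and `L z = conj z - γ z - conj w`, so that `f = L` on the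
ring `Γ = frontier U`. The function `H = f * ((1 - γ²) z - γ f - (w + γ conj w))` is holomorphic
off `K`, equals `f * conj f = ‖L‖²` on `Γ`, and tends to `(1 - γ²) μ(ℂ)` at infinity. By the
maximum principle `im H` vanishes on the unbounded domain `(closure U)ᶜ`, so by the open mapping
theorem `H` is constant there and `‖L‖² = (1 - γ²) μ(ℂ)` on its boundary, the outer boundary
`frontier (closure U) ⊆ Γ`. This constant is positive (otherwise the outer boundary would lie on
a line), so `γ² ≠ 1` and the level set is an ellipse `T '' sphere 0 1`. Separating the inside and
the outside of the ellipse shows that the whole ellipse lies on the outer boundary, hence in `Γ`;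
finally a topological circle contains no proper subset that is itself a topological circle.
-/

open Complex MeasureTheory
open Metric Set Filter Bornology Topology ComplexConjugate

section Topology

variable {E : Type*} [NormedAddCommGroup E] [NormedSpace ℝ E]

theorem isPreconnected_compl_closedBall (h : 1 < Module.rank ℝ E) (x : E) {r : ℝ}
    (hr : 0 ≤ r) : IsPreconnected (closedBall x r)ᶜ := by
  have : (closedBall x r)ᶜ = (fun p : ℝ × E => x + p.1 • p.2) '' (Ioi r ×ˢ sphere 0 1) := by
    ext y
    simp only [mem_compl_iff, mem_closedBall, not_le, mem_image, mem_prod, mem_Ioi,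
      mem_sphere_zero_iff_norm, Prod.exists]
    constructor
    · intro hy
      have hd : dist y x ≠ 0 := (hr.trans_lt hy).ne'
      refine ⟨dist y x, (dist y x)⁻¹ • (y - x), ⟨hy, ?_⟩, ?_⟩
      · rw [norm_smul, ← dist_eq_norm, norm_inv, Real.norm_of_nonneg dist_nonneg,
          inv_mul_cancel₀ hd]
      · rw [smul_smul, mul_inv_cancel₀ hd, one_smul, add_sub_cancel]
    · rintro ⟨t, v, ⟨ht, hv⟩, rfl⟩
      rwa [dist_eq_norm, add_sub_cancel_left, norm_smul, hv, mul_one,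
        Real.norm_of_nonneg (hr.trans ht.le)]
  rw [this]
  exact (isPreconnected_Ioi.prod (isPreconnected_sphere h 0 1)).image _ (by fun_prop)

theorem Homeomorph.isBounded_of_isBounded_image {X Y : Type*} [PseudoMetricSpace X]
    [PseudoMetricSpace Y] [ProperSpace Y] (e : X ≃ₜ Y) {s : Set X}
    (hs : IsBounded (e '' s)) : IsBounded s :=
  (hs.isCompact_closure.image e.symm.continuous).isBounded.subset fun x hx =>
    ⟨e x, subset_closure (mem_image_of_mem e hx), e.symm_apply_apply x⟩

theorem IsPreconnected.subset_interior_closure_or_subset_compl_closure {X : Type*}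
    [TopologicalSpace X] {U P : Set X} (hP : IsPreconnected P)
    (hPS : Disjoint P (frontier (closure U))) :
    P ⊆ interior (closure U) ∨ P ⊆ (closure U)ᶜ := by
  refine hP.subset_or_subset isOpen_interior isClosed_closure.isOpen_compl
    (disjoint_compl_right.mono_left interior_subset) fun x hx => ?_
  by_contra h
  simp only [mem_union, mem_compl_iff, not_or, not_not] at h
  exact hPS.notMem_of_mem_left hx ⟨by rw [closure_closure]; exact h.2, h.1⟩

theorem subset_compl_closure_of_isPreconnected {X : Type*} [PseudoMetricSpace X]
    {U P : Set X} (hU : IsBounded U) (hP : IsPreconnected P) (hPU : ¬IsBounded P)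
    (hPS : Disjoint P (frontier (closure U))) : P ⊆ (closure U)ᶜ :=
  (hP.subset_interior_closure_or_subset_compl_closure hPS).resolve_left fun hPW =>
    hPU (hU.closure.subset (hPW.trans interior_subset))

theorem image_sphere_subset_frontier_closure [ProperSpace E] (h : 1 < Module.rank ℝ E)
    {U : Set E} (hU : IsBounded U) (hUo : IsOpen U) (hUne : U.Nonempty) (e : E ≃ₜ E)
    (hS : frontier (closure U) ⊆ e '' sphere 0 1) :
    e '' sphere 0 1 ⊆ frontier (closure U) := by
  have : Nontrivial E := rank_pos_iff_nontrivial.mp (zero_lt_one.trans h)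
  have hdisj {A : Set E} (hA : Disjoint A (sphere 0 1)) :
      Disjoint (e '' A) (frontier (closure U)) :=
    ((disjoint_image_iff e.injective).mpr hA).mono_right hS
  have hout : e '' (closedBall 0 1)ᶜ ⊆ (closure U)ᶜ := by
    refine subset_compl_closure_of_isPreconnected hU
      ((isPreconnected_compl_closedBall h 0 zero_le_one).image e e.continuous.continuousOn)
      (fun hb => NormedSpace.unbounded_univ ℝ E ?_)
      (hdisj (disjoint_compl_left.mono_right sphere_subset_closedBall))
    rw [← union_compl_self (closedBall (0 : E) 1)]
    exact isBounded_closedBall.union (e.isBounded_of_isBounded_image hb)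
  have hin : e '' ball 0 1 ⊆ interior (closure U) := by
    refine ((isPreconnected_ball.image e e.continuous.continuousOn)
      |>.subset_interior_closure_or_subset_compl_closure
      (hdisj sphere_disjoint_ball.symm)).resolve_right fun hball => ?_
    have hUS : U ⊆ e '' sphere 0 1 := fun u hu => by
      obtain ⟨v, rfl⟩ := e.surjective u
      rw [e.injective.mem_set_image, mem_sphere_zero_iff_norm]
      by_contra hv
      rcases lt_or_gt_of_ne hv with hv | hv
      · exact hball ⟨v, mem_ball_zero_iff.mpr hv, rfl⟩ (subset_closure hu)
      · exact hout ⟨v, by simpa using hv, rfl⟩ (subset_closure hu)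
    have := interior_mono hUS
    rw [hUo.interior_eq, ← e.image_interior, interior_sphere 0 one_ne_zero, image_empty] at this
    exact hUne.ne_empty (subset_empty_iff.mp this)
  rw [frontier_eq_closure_inter_closure, closure_closure]
  refine subset_inter ?_ ?_
  · calc e '' sphere 0 1 ⊆ e '' closure (ball 0 1) :=
          image_mono (closure_ball (0 : E) one_ne_zero ▸ sphere_subset_closedBall)
      _ = closure (e '' ball 0 1) := e.image_closure _
      _ ⊆ closure U := closure_minimal (hin.trans interior_subset) isClosed_closure
  · calc e '' sphere 0 1 ⊆ e '' closure (closedBall 0 1)ᶜ := by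
          rw [← frontier_closedBall (0 : E) one_ne_zero, frontier_eq_closure_inter_closure]
          exact image_mono inter_subset_right
      _ = closure (e '' (closedBall 0 1)ᶜ) := e.image_closure _
      _ ⊆ closure (closure U)ᶜ := closure_mono hout

theorem nonempty_frontier_closure [Nontrivial E] {U : Set E} (hU : IsBounded U)
    (hUne : U.Nonempty) : (frontier (closure U)).Nonempty :=
  nonempty_frontier_iff.mpr
    ⟨hUne.closure, fun h => NormedSpace.unbounded_univ ℝ E (h ▸ hU.closure)⟩

theorem closure_subset_halfSpace_of_frontier_subset_hyperplane {U : Set E} (hU : IsBounded U)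
    {φ : E →L[ℝ] ℝ} {v : E} (hv : φ v = 1) {t : ℝ}
    (hS : frontier (closure U) ⊆ {x | φ x = t}) : closure U ⊆ {x | φ x ≤ t} := by
  have hP : {x | t < φ x} ⊆ (closure U)ᶜ := by
    refine subset_compl_closure_of_isPreconnected hU
      (convex_halfSpace_gt φ.isLinear t).isPreconnected (fun hb => ?_)
      (disjoint_left.mpr fun x hx hxS => (hS hxS).not_gt hx)
    obtain ⟨B, hB⟩ := (φ.lipschitz.isBounded_image hb).bddAbove
    have hmem : (max t B + 1) • v ∈ {x | t < φ x} := by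
      simp only [mem_ofPred_eq, map_smul, hv, smul_eq_mul, mul_one]
      linarith [le_max_left t B]
    have := hB (mem_image_of_mem φ hmem)
    simp only [map_smul, hv, smul_eq_mul, mul_one] at this
    linarith [le_max_right t B]
  exact fun x hx => show φ x ≤ t from not_lt.mp fun h => hP h hx

theorem not_frontier_closure_subset_hyperplane {U : Set E} (hU : IsBounded U) (hUo : IsOpen U)
    (hUne : U.Nonempty) {φ : E →L[ℝ] ℝ} (hφ : φ ≠ 0) (t : ℝ) :
    ¬frontier (closure U) ⊆ {x | φ x = t} := by
  intro hS
  obtain ⟨v, hv⟩ : ∃ v, φ v = 1 := by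
    obtain ⟨a, ha⟩ := DFunLike.ne_iff.mp hφ
    exact ⟨(φ a)⁻¹ • a, by simp [inv_mul_cancel₀ ha]⟩
  have hle := closure_subset_halfSpace_of_frontier_subset_hyperplane hU hv hS
  have hge := closure_subset_halfSpace_of_frontier_subset_hyperplane hU
    (φ := -φ) (v := -v) (t := -t) (by simp [hv]) fun x hx => by simp [hS hx]
  obtain ⟨u, hu⟩ := hUne
  have hline : ∀ᶠ c : ℝ in 𝓝 0, u + c • v ∈ U :=
    (Continuous.tendsto (f := fun c : ℝ => u + c • v) (by fun_prop) 0).eventually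
      (by simpa using hUo.mem_nhds hu)
  obtain ⟨c, hc, hc0⟩ := ((hline.filter_mono nhdsWithin_le_nhds).and self_mem_nhdsWithin :
    ∀ᶠ c : ℝ in 𝓝[≠] 0, u + c • v ∈ U ∧ c ≠ 0).exists
  have hφ_eq {x} (hx : x ∈ U) : φ x = t := le_antisymm (hle (subset_closure hx))
    (by simpa using hge (subset_closure hx))
  have := hφ_eq hc
  rw [map_add, map_smul, hv, hφ_eq hu, smul_eq_mul, mul_one] at this
  exact hc0 (by linarith)

end Topology

section Circle

variable {E : Type*} [NormedAddCommGroup E] [NormedSpace ℝ E]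

theorem Continuous.not_injective_sphere_real (h : 1 < Module.rank ℝ E)
    {f : sphere (0 : E) 1 → ℝ} (hf : Continuous f) : ¬Function.Injective f := by
  intro hinj
  have : Nontrivial E := rank_pos_iff_nontrivial.mp (zero_lt_one.trans h)
  have : PreconnectedSpace (sphere (0 : E) 1) :=
    Subtype.preconnectedSpace (isPreconnected_sphere h 0 1)
  obtain ⟨a, ha⟩ := (NormedSpace.sphere_nonempty (x := (0 : E))).mpr zero_le_one
  set a : sphere (0 : E) 1 := ⟨a, ha⟩
  -- Borsuk–Ulam in dimension one: `u ↦ f u - f (-u)` is odd, hence vanishes somewhere.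
  set g : sphere (0 : E) 1 → ℝ := fun u => f u - f (-u)
  have hg : Continuous g := by fun_prop
  have hodd (u) : g (-u) = -g u := by simp [g]
  obtain ⟨u, hu⟩ : ∃ u, g u = 0 := by
    rcases le_total (g a) 0 with h0 | h0
    · exact intermediate_value_univ a (-a) hg ⟨h0, by rw [hodd]; linarith⟩
    · exact intermediate_value_univ (-a) a hg ⟨by rw [hodd]; linarith, h0⟩
  have huu : (u : E) = -u := congrArg Subtype.val (hinj (sub_eq_zero.mp hu))
  have hu0 : (u : E) = 0 := by
    have := congrArg (· + (u : E)) huu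
    simpa [← two_smul ℝ] using this
  simpa [hu0] using u.2

theorem Continuous.surjective_of_injective_sphere {ψ : sphere (0 : ℂ) 1 → sphere (0 : ℂ) 1}
    (hψ : Continuous ψ) (hinj : Function.Injective ψ) : Function.Surjective ψ := by
  intro q
  by_contra hq
  push Not at hq
  set z : sphere (0 : ℂ) 1 → ℂ := fun u => -(ψ u * conj (q : ℂ))
  have hz_norm (u) : ‖z u‖ = 1 := by simp [z]
  have hq_ne : conj (q : ℂ) ≠ 0 := by simp [← norm_ne_zero_iff]
  have hslit : range z ⊆ slitPlane := by
    refine (subset_slitPlane_iff_of_subset_sphere (r := 1) ?_).mpr ?_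
    · rintro _ ⟨u, rfl⟩
      simp [hz_norm]
    · rintro ⟨u, hu⟩
      have h1 : (ψ u : ℂ) * conj (q : ℂ) = 1 := by simpa [z] using hu
      refine hq u (Subtype.ext ?_)
      calc (ψ u : ℂ) = ψ u * conj (q : ℂ) * q := by
            rw [mul_assoc, conj_mul', (mem_sphere_zero_iff_norm.mp q.2)]; simp
        _ = q := by rw [h1, one_mul]
  refine Continuous.not_injective_sphere_real (f := arg ∘ z)
    (by rw [rank_real_complex]; norm_num) ?_ fun a b hab => hinj (Subtype.ext ?_)
  · exact continuous_iff_continuousAt.mpr fun u =>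
      (continuousAt_arg (hslit ⟨u, rfl⟩)).comp (by fun_prop)
  · have := ext_norm_arg ((hz_norm a).trans (hz_norm b).symm) hab
    exact mul_right_cancel₀ hq_ne (neg_injective this)

theorem eq_of_subset_of_homeomorph_sphere {X : Type*} [TopologicalSpace X] {s t : Set X}
    (hst : s ⊆ t) (hs : s ≃ₜ sphere (0 : ℂ) 1) (ht : t ≃ₜ sphere (0 : ℂ) 1) : s = t := by
  have hsurj := Continuous.surjective_of_injective_sphere
    (ψ := ht ∘ inclusion hst ∘ hs.symm) (by fun_prop)
    (ht.injective.comp ((inclusion_injective hst).comp hs.symm.injective))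
  refine hst.antisymm fun x hx => ?_
  obtain ⟨u, hu⟩ := hsurj (ht ⟨x, hx⟩)
  have hx' : ((hs.symm u : s) : X) = x := congrArg Subtype.val (ht.injective hu)
  exact hx' ▸ (hs.symm u).2

end Circle

theorem AffineEquiv.exists_preimage_sphere_eq_image_sphere {E : Type*} [NormedAddCommGroup E]
    [NormedSpace ℝ E] (A : E ≃ᵃ[ℝ] E) (c : E) {r : ℝ} (hr : 0 < r) :
    ∃ T : E ≃ᵃ[ℝ] E, A ⁻¹' sphere c r = T '' sphere 0 1 := by
  refine ⟨((A.trans (AffineEquiv.constVAdd ℝ E (-c))).trans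
    (LinearEquiv.smulOfNeZero ℝ E r⁻¹ (inv_ne_zero hr.ne')).toAffineEquiv).symm, ?_⟩
  ext x
  simp only [AffineEquiv.image_symm, mem_preimage, mem_sphere_iff_norm, sub_zero]
  simp only [AffineEquiv.trans_apply, AffineEquiv.constVAdd_apply, vadd_eq_add,
    LinearEquiv.coe_toAffineEquiv, LinearEquiv.smulOfNeZero_apply, neg_add_eq_sub, norm_smul,
    norm_inv, Real.norm_of_nonneg hr.le, inv_mul_eq_one₀ hr.ne', eq_comm (b := r)]

section MaxModulus

variable {E F : Type*} [NormedAddCommGroup E] [NormedSpace ℂ E] [Nontrivial E]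
  [NormedAddCommGroup F] [NormedSpace ℂ F]

theorem Complex.norm_le_of_forall_mem_frontier_norm_le_of_cobounded {f : E → F} {Ω : Set E}
    (hd : DiffContOnCl ℂ f Ω) {C : ℝ} (hC : ∀ z ∈ frontier Ω, ‖f z‖ ≤ C)
    (hinf : ∀ᶠ z in cobounded E, ‖f z‖ ≤ C) {z : E} (hz : z ∈ Ω) : ‖f z‖ ≤ C := by
  obtain ⟨r, -, hr⟩ := (hasBasis_cobounded_compl_ball 0).eventually_iff.mp hinf
  set R := max r (‖z‖ + 1)
  refine norm_le_of_forall_mem_frontier_norm_le (U := Ω ∩ ball 0 R)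
    (isBounded_ball.subset inter_subset_right) (hd.mono inter_subset_left) (fun x hx => ?_)
    (subset_closure ⟨hz, ?_⟩)
  · rcases frontier_inter_subset Ω (ball 0 R) hx with hx | hx
    · exact hC x hx.1
    · refine hr fun hxr => ?_
      have h1 := frontier_ball_subset_sphere hx.2
      rw [mem_sphere_zero_iff_norm] at h1
      rw [mem_ball_zero_iff] at hxr
      linarith [le_max_left r (‖z‖ + 1)]
  · rw [mem_ball_zero_iff]
    linarith [le_max_right r (‖z‖ + 1)]

theorem DiffContOnCl.im_nonpos_of_forall_mem_frontier {H : E → ℂ} {Ω : Set E}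
    (hd : DiffContOnCl ℂ H Ω) (hfr : ∀ z ∈ frontier Ω, (H z).im ≤ 0)
    (hinf : Tendsto (fun z => (H z).im) (cobounded E) (𝓝 0)) {z : E} (hz : z ∈ Ω) :
    (H z).im ≤ 0 := by
  have hnorm (x : E) : ‖exp (-I * H x)‖ = Real.exp (H x).im := by simp [norm_exp]
  refine le_of_forall_pos_le_add fun ε hε => ?_
  have := norm_le_of_forall_mem_frontier_norm_le_of_cobounded (f := fun x => exp (-I * H x))
    ⟨(hd.differentiableOn.const_mul _).cexp, (continuousOn_const.mul hd.continuousOn).cexp⟩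
    (C := Real.exp ε) (fun x hx => ?_) ?_ hz
  · rwa [hnorm, Real.exp_le_exp, ← zero_add ε] at this
  · rw [hnorm, Real.exp_le_exp]
    exact (hfr x hx).trans hε.le
  · filter_upwards [hinf.eventually (gt_mem_nhds hε)] with x hx
    rw [hnorm, Real.exp_le_exp]
    exact hx.le

end MaxModulus

theorem exists_eqOn_const_of_forall_im_eq_zero {H : ℂ → ℂ} {Ω : Set ℂ} (hΩo : IsOpen Ω)
    (hΩc : IsPreconnected Ω) (hd : DifferentiableOn ℂ H Ω) (him : ∀ z ∈ Ω, (H z).im = 0) :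
    ∃ c, ∀ z ∈ Ω, H z = c := by
  rcases Ω.eq_empty_or_nonempty with rfl | ⟨z₀, hz₀⟩
  · exact ⟨0, fun z hz => hz.elim⟩
  refine ((hd.analyticOnNhd hΩo).is_constant_or_isOpen hΩc).resolve_right fun hopen => ?_
  have := interior_maximal (show H '' Ω ⊆ {w | w.im ≤ 0} from
    image_subset_iff.mpr fun z hz => (him z hz).le) (hopen Ω subset_rfl hΩo)
  rw [interior_setOfPred_im_le] at this
  exact (this ⟨z₀, hz₀, rfl⟩).ne (him z₀ hz₀)

theorem eqOn_closure_of_forall_mem_frontier_im_eq_zero {H : ℂ → ℂ} {Ω : Set ℂ} {k : ℝ}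
    (hΩo : IsOpen Ω) (hΩc : IsPreconnected Ω) (hΩ : Ω ∈ cobounded ℂ) (hd : DiffContOnCl ℂ H Ω)
    (hfr : ∀ z ∈ frontier Ω, (H z).im = 0) (hlim : Tendsto H (cobounded ℂ) (𝓝 k)) :
    EqOn H (fun _ => (k : ℂ)) (closure Ω) := by
  have hlim_im : Tendsto (fun z => (H z).im) (cobounded ℂ) (𝓝 0) := by
    have := (continuous_im.tendsto (k : ℂ)).comp hlim
    rwa [ofReal_im] at this
  have him (z) (hz : z ∈ Ω) : (H z).im = 0 := by
    have hle := hd.im_nonpos_of_forall_mem_frontier (fun x hx => (hfr x hx).le) hlim_im hz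
    have hge := hd.neg.im_nonpos_of_forall_mem_frontier (fun x hx => by simp [hfr x hx])
      (by simpa using hlim_im.neg) hz
    simp only [Pi.neg_apply, neg_im, neg_nonpos] at hge
    exact le_antisymm hle hge
  obtain ⟨c, hc⟩ := exists_eqOn_const_of_forall_im_eq_zero hΩo hΩc hd.differentiableOn him
  obtain rfl : c = k := tendsto_nhds_unique
    (tendsto_const_nhds.congr' (eventually_of_mem hΩ fun z hz => (hc z hz).symm)) hlim
  exact EqOn.of_subset_closure hc hd.continuousOn continuousOn_const subset_closure subset_rfl

noncomputable def cauchyTransform (μ : Measure ℂ) (z : ℂ) : ℂ := ∫ ζ, (z - ζ)⁻¹ ∂μ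

namespace cauchyTransform

variable {μ : Measure ℂ} [IsFiniteMeasure μ] {K : Set ℂ}

theorem integrable_inv_sub (hμK : ∀ᵐ ζ ∂μ, ζ ∈ K) {z : ℂ} {δ : ℝ} (hδ : 0 < δ)
    (hzK : ∀ ζ ∈ K, δ ≤ ‖z - ζ‖) : Integrable (fun ζ => (z - ζ)⁻¹) μ := by
  refine (integrable_const δ⁻¹).mono' (by fun_prop) ?_
  filter_upwards [hμK] with ζ hζ
  rw [norm_inv]
  exact inv_anti₀ hδ (hzK ζ hζ)

theorem differentiableAt (hK : IsClosed K) (hμK : ∀ᵐ ζ ∂μ, ζ ∈ K) {z : ℂ} (hz : z ∉ K) :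
    DifferentiableAt ℂ (cauchyTransform μ) z := by
  obtain ⟨ε, hε, hball⟩ := Metric.isOpen_iff.mp hK.isOpen_compl z hz
  have hfar : ∀ x ∈ ball z (ε / 2), ∀ ζ ∈ K, ε / 2 ≤ ‖x - ζ‖ := by
    intro x hx ζ hζ
    have h1 : ε ≤ dist ζ z := not_lt.mp fun h => hball (mem_ball.mpr h) hζ
    have h2 := dist_triangle ζ x z
    rw [mem_ball] at hx
    rw [← dist_eq_norm, dist_comm]
    linarith
  have hne {x ζ} (hx : x ∈ ball z (ε / 2)) (hζ : ζ ∈ K) : x - ζ ≠ 0 :=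
    norm_pos_iff.mp ((half_pos hε).trans_le (hfar x hx ζ hζ))
  refine (hasDerivAt_integral_of_dominated_loc_of_deriv_le (ball_mem_nhds z (half_pos hε))
    (F' := fun x ζ => -((x - ζ) ^ 2)⁻¹) (bound := fun _ => ((ε / 2) ^ 2)⁻¹)
    (Eventually.of_forall fun x => by fun_prop)
    (integrable_inv_sub hμK (half_pos hε) (hfar z (mem_ball_self (half_pos hε))))
    (by fun_prop) ?_ (integrable_const _) ?_).2.differentiableAt
  · filter_upwards [hμK] with ζ hζ x hx
    rw [norm_neg, norm_inv, norm_pow]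
    exact inv_anti₀ (by positivity) (pow_le_pow_left₀ (half_pos hε).le (hfar x hx ζ hζ) 2)
  · filter_upwards [hμK] with ζ hζ x hx
    exact (hasDerivAt_inv (hne hx hζ)).comp_sub_const x ζ

theorem tendsto_mul_self (hK : IsBounded K) (hμK : ∀ᵐ ζ ∂μ, ζ ∈ K) :
    Tendsto (fun z => z * cauchyTransform μ z) (cobounded ℂ) (𝓝 (μ.real univ : ℂ)) := by
  obtain ⟨R, hR, hKR⟩ := hK.subset_closedBall_lt 0 0
  rw [← tendsto_sub_nhds_zero_iff]
  refine squeeze_zero_norm' ?_ (by simpa using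
    ((tendsto_inv₀_cobounded (α := ℂ)).norm.const_mul (2 * R * μ.real univ) : Tendsto _ _ (𝓝 _)))
  filter_upwards [tendsto_norm_cobounded_atTop.eventually_ge_atTop (2 * R)] with z hz
  have hz0 : 0 < ‖z‖ := by linarith
  have hfar : ∀ ζ ∈ K, ‖z‖ / 2 ≤ ‖z - ζ‖ := fun ζ hζ => by
    have := mem_closedBall_zero_iff.mp (hKR hζ)
    linarith [norm_sub_norm_le z ζ]
  have hint := integrable_inv_sub hμK (half_pos hz0) hfar
  have hid : z * cauchyTransform μ z - μ.real univ = ∫ ζ, (z * (z - ζ)⁻¹ - 1) ∂μ := by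
    rw [integral_sub (hint.const_mul z) (integrable_const 1), integral_const_mul,
      integral_const, cauchyTransform, real_smul, mul_one]
  rw [hid, mul_comm (2 * R), mul_assoc]
  refine norm_integral_le_of_norm_le_const ?_ |>.trans_eq (mul_comm _ _)
  filter_upwards [hμK] with ζ hζ
  have hzζ : z - ζ ≠ 0 := norm_pos_iff.mp ((half_pos hz0).trans_le (hfar ζ hζ))
  have : z * (z - ζ)⁻¹ - 1 = ζ * (z - ζ)⁻¹ := by field_simp; ring
  rw [this, norm_mul, norm_inv]
  calc ‖ζ‖ * ‖z - ζ‖⁻¹ ≤ R * (‖z‖ / 2)⁻¹ :=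
        mul_le_mul (mem_closedBall_zero_iff.mp (hKR hζ)) (inv_anti₀ (half_pos hz0) (hfar ζ hζ))
          (by positivity) hR.le
    _ = 2 * R * ‖z‖⁻¹ := by field_simp

theorem tendsto_zero (hK : IsBounded K) (hμK : ∀ᵐ ζ ∂μ, ζ ∈ K) :
    Tendsto (cauchyTransform μ) (cobounded ℂ) (𝓝 0) := by
  have := (tendsto_inv₀_cobounded (α := ℂ)).mul (tendsto_mul_self hK hμK)
  rw [zero_mul] at this
  refine this.congr' ?_
  filter_upwards [eventually_ne_cobounded 0] with z hz
  rw [← mul_assoc, inv_mul_cancel₀ hz, one_mul]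

end cauchyTransform

noncomputable def shearedConj (γ : ℝ) : ℂ →ₗ[ℝ] ℂ := conjAe.toLinearMap - γ • LinearMap.id

@[simp]
theorem shearedConj_apply (γ : ℝ) (z : ℂ) : shearedConj γ z = conj z - γ * z := by
  simp [shearedConj, real_smul]

theorem shearedConj_injective {γ : ℝ} (hγ : γ ^ 2 ≠ 1) : Function.Injective (shearedConj γ) := by
  refine (injective_iff_map_eq_zero _).mpr fun z hz => ?_
  rw [shearedConj_apply, sub_eq_zero] at hz
  have h := congrArg conj hz
  simp only [conj_conj, map_mul, conj_ofReal] at h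
  have : ((1 - γ ^ 2 : ℝ) : ℂ) * z = 0 := by push_cast; linear_combination h + γ * hz
  exact (mul_eq_zero.mp this).resolve_left (by exact_mod_cast sub_ne_zero.mpr hγ.symm)

theorem exists_hyperplane_of_shearedConj_eq (γ : ℝ) (c : ℂ) :
    ∃ φ : ℂ →L[ℝ] ℝ, φ ≠ 0 ∧ ∃ t, ∀ z, shearedConj γ z = c → φ z = t := by
  by_cases hγ : γ = 1
  · refine ⟨imCLM, fun h => by simpa using congrArg (· I) h, -c.im / 2, fun z hz => ?_⟩
    have := congrArg im hz
    simp only [hγ, shearedConj_apply, ofReal_one, one_mul, sub_im, conj_im] at this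
    rw [imCLM_apply]
    linarith
  · refine ⟨reCLM, fun h => by simpa using congrArg (· 1) h, c.re / (1 - γ), fun z hz => ?_⟩
    have := congrArg re hz
    simp only [shearedConj_apply, sub_re, conj_re, mul_re, ofReal_re, ofReal_im, zero_mul,
      sub_zero] at this
    rw [reCLM_apply, eq_div_iff (sub_ne_zero.mpr (Ne.symm hγ))]
    linarith

theorem lens_conj_identity (γ : ℝ) (w z : ℂ) :
    conj (shearedConj γ z - conj w) =
      (1 - (γ : ℂ) ^ 2) * z - γ * (shearedConj γ z - conj w) - (w + γ * conj w) := by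
  simp only [shearedConj_apply, map_sub, map_mul, conj_conj, conj_ofReal]
  ring

theorem sq_norm_shearedConj_sub_eq_of_lens {μ : Measure ℂ} [IsFiniteMeasure μ] {K : Set ℂ}
    (hK : IsCompact K) (hμK : μ Kᶜ = 0) {γ : ℝ} {w : ℂ} {U : Set ℂ} (hUo : IsOpen U)
    (hUb : IsBounded U) (hKU : K ⊆ U) (hext : IsPreconnected (closure U)ᶜ)
    (hlens : ∀ z ∈ frontier U, conj z - cauchyTransform μ z - γ * z = conj w) :
    ∀ x ∈ frontier (closure U), ‖shearedConj γ x - conj w‖ ^ 2 = (1 - γ ^ 2) * μ.real univ := by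
  have hμK' : ∀ᵐ ζ ∂μ, ζ ∈ K := mem_ae_iff.mpr hμK
  set f := cauchyTransform μ
  set H : ℂ → ℂ := fun z => f z * ((1 - (γ : ℂ) ^ 2) * z - γ * f z - (w + γ * conj w))
  have hH_ring (x) (hx : x ∈ frontier U) : H x = (‖shearedConj γ x - conj w‖ ^ 2 : ℝ) := by
    have hfx : f x = shearedConj γ x - conj w := by
      rw [shearedConj_apply]; linear_combination -hlens x hx
    simp only [H, hfx, ← lens_conj_identity, mul_conj', ofReal_pow]
  have hH_diff : DiffContOnCl ℂ H (closure U)ᶜ := by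
    refine DifferentiableOn.diffContOnCl fun z hz => ?_
    have hzK : z ∉ K := fun h => by
      rw [closure_compl] at hz
      exact hz (hUo.subset_interior_closure (hKU h))
    have := cauchyTransform.differentiableAt hK.isClosed hμK' hzK
    exact (by fun_prop : DifferentiableAt ℂ H z).differentiableWithinAt
  have hH_lim : Tendsto H (cobounded ℂ) (𝓝 ((1 - γ ^ 2) * μ.real univ : ℝ)) := by
    have hf := cauchyTransform.tendsto_zero hK.isBounded hμK'
    have hzf := cauchyTransform.tendsto_mul_self hK.isBounded hμK'
    have := ((hzf.const_mul (1 - (γ : ℂ) ^ 2)).sub ((hf.mul hf).const_mul (γ : ℂ))).sub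
      (hf.const_mul (w + γ * conj w))
    rw [show (1 - (γ : ℂ) ^ 2) * μ.real univ - γ * (0 * 0) - (w + γ * conj w) * 0 =
      ((1 - γ ^ 2) * μ.real univ : ℝ) by push_cast; ring] at this
    exact this.congr fun z => by simp only [H, f]; ring
  intro x hx
  rw [← frontier_compl] at hx
  have := eqOn_closure_of_forall_mem_frontier_im_eq_zero isClosed_closure.isOpen_compl hext
    hUb.closure hH_diff (fun z hz => ?_) hH_lim (frontier_subset_closure hx)
  · rw [frontier_compl] at hx
    exact ofReal_injective ((hH_ring x (frontier_closure_subset hx)).symm.trans this)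
  · rw [frontier_compl] at hz
    rw [hH_ring z (frontier_closure_subset hz), ofReal_im]

theorem pos_of_forall_sq_norm_shearedConj_sub_eq {U : Set ℂ} (hU : IsBounded U)
    (hUo : IsOpen U) (hUne : U.Nonempty) {γ : ℝ} {c : ℂ} {k : ℝ}
    (hk : ∀ x ∈ frontier (closure U), ‖shearedConj γ x - c‖ ^ 2 = k) : 0 < k := by
  obtain ⟨x₀, hx₀⟩ := nonempty_frontier_closure hU hUne
  refine (hk x₀ hx₀ ▸ sq_nonneg _).lt_of_ne fun hk0 => ?_
  obtain ⟨φ, hφ, t, hφt⟩ := exists_hyperplane_of_shearedConj_eq γ c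
  refine not_frontier_closure_subset_hyperplane hU hUo hUne hφ t fun x hx => hφt x ?_
  have := hk x hx
  rwa [← hk0, sq_eq_zero_iff, norm_eq_zero, sub_eq_zero] at this

theorem einstein_ring_with_shear_is_ellipse_general
    (μ : Measure ℂ) (hfinμ : IsFiniteMeasure μ)
    (K : Set ℂ) (hKcpt : IsCompact K) (hKsupp : μ Kᶜ = 0)
    (γ : ℝ) (w : ℂ)
    (U : Set ℂ) (hUopen : IsOpen U) (hUconn : IsConnected U)
    (hUbdd : Bornology.IsBounded U) (hKU : K ⊆ U)
    (hhomeo : Nonempty (frontier U ≃ₜ Metric.sphere (0 : ℂ) 1))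
    (hext : IsConnected (closure U)ᶜ)
    (hlens : ∀ z ∈ frontier U,
      starRingEnd ℂ z - (∫ ζ, (z - ζ)⁻¹ ∂μ) - (γ : ℂ) * z = starRingEnd ℂ w) :
    ∃ T : ℂ ≃ᵃ[ℝ] ℂ, frontier U = ⇑T '' Metric.sphere (0 : ℂ) 1 := by
  obtain ⟨e⟩ := hhomeo
  have hk := sq_norm_shearedConj_sub_eq_of_lens hKcpt hKsupp hUopen hUbdd hKU
    hext.isPreconnected hlens
  have hk_pos := pos_of_forall_sq_norm_shearedConj_sub_eq hUbdd hUopen hUconn.nonempty hk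
  have hγ : γ ^ 2 ≠ 1 := fun h => by simp [h] at hk_pos
  obtain ⟨T, hT⟩ := (LinearEquiv.ofInjectiveEndo _ (shearedConj_injective hγ)).toAffineEquiv
    |>.exists_preimage_sphere_eq_image_sphere (conj w) (Real.sqrt_pos.mpr hk_pos)
  have hS : frontier (closure U) ⊆ T '' sphere 0 1 := by
    intro x hx
    rw [← hT, mem_preimage, mem_sphere_iff_norm, ← hk x hx]
    exact (Real.sqrt_sq (norm_nonneg _)).symm
  have hsub : T '' sphere 0 1 ⊆ frontier U :=
    (image_sphere_subset_frontier_closure (by rw [rank_real_complex]; norm_num) hUbdd hUopen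
      hUconn.nonempty (AffineEquiv.toContinuousAffineEquiv T).toHomeomorph hS).trans
      frontier_closure_subset
  exact ⟨T, (eq_of_subset_of_homeomorph_sphere hsub
    ((AffineEquiv.toContinuousAffineEquiv T).toHomeomorph.image _).symm e).symm⟩

/-- Einstein rings with nonzero shear are ellipses: if a compactly supported mass
distribution with shear `γ ≠ 0` produces a whole image curve `Γ` (the frontier of a
bounded domain surrounding the mass, homeomorphic to a circle), then `Γ` is an
ellipse, i.e. the image of the unit circle under an invertible real-affine map. -/
theorem einstein_ring_with_shear_is_ellipse
    (μ : Measure ℂ) (hfinμ : IsFiniteMeasure μ)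
    (K : Set ℂ) (hKcpt : IsCompact K) (hKsupp : μ Kᶜ = 0)
    (γ : ℝ) (hγ : γ ≠ 0) (w : ℂ)
    (U : Set ℂ) (hUopen : IsOpen U) (hUconn : IsConnected U)
    (hUbdd : Bornology.IsBounded U) (hKU : K ⊆ U)
    (hhomeo : Nonempty (frontier U ≃ₜ Metric.sphere (0 : ℂ) 1))
    (hdisj : Disjoint (frontier U) K)
    (hext : IsConnected (closure U)ᶜ)
    (hlens : ∀ z ∈ frontier U,
      starRingEnd ℂ z - (∫ ζ, (z - ζ)⁻¹ ∂μ) - (γ : ℂ) * z = starRingEnd ℂ w) :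
    ∃ T : ℂ ≃ᵃ[ℝ] ℂ, frontier U = ⇑T '' Metric.sphere (0 : ℂ) 1 :=
  einstein_ring_with_shear_is_ellipse_general μ hfinμ K hKcpt hKsupp γ w U hUopen hUconn hUbdd hKU
    hhomeo hext hlens
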